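/- Let V be a dissipative quadratic stochastic operator on S^{m-1} with coefficients p_{ij,k} such that p_{ii,1} = 1 for all i ≠ 2 and p_{22,2} = 1. Then V has infinitely many fixed points, and for every initial point x⁰ ∈ S^{m-1} the ω-limit set of its trajectory satisfies ω(x⁰) ⊆ {λe₁ + (1−λ)e₂ : 0 ≤ λ ≤ 1}, the segment joining the vertices e₁ and e₂. -/

import Mathlib

open Finset Filter Topology

/-- `Majorizes y x` means `x ≺ y`: for every `k`, the sum of the `k` largest components of
`x` is at most the sum of the `k` largest components of `y`.  This is expressed via the
standard equivalent form: every subset-sum of `x` is dominated by some subset-sum of `y`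
over a subset of the same cardinality (the maximum of the latter over subsets of
cardinality `k` being exactly the sum of the `k` largest components of `y`). -/
def Majorizes {m : ℕ} (y x : Fin m → ℝ) : Prop :=
  ∀ A : Finset (Fin m), ∃ B : Finset (Fin m),
    B.card = A.card ∧ ∑ i ∈ A, x i ≤ ∑ i ∈ B, y i

/-- The quadratic operator `(Vx)_k = ∑_{i,j} p_{ij,k} x_i x_j` with heredity
coefficients `p`. -/
def QSO {m : ℕ} (p : Fin m → Fin m → Fin m → ℝ) (x : Fin m → ℝ) : Fin m → ℝ :=
  fun k => ∑ i, ∑ j, p i j k * x i * x j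

/-- Conditions on heredity coefficients: symmetry, nonnegativity, stochasticity. -/
def IsQSOCoeff {m : ℕ} (p : Fin m → Fin m → Fin m → ℝ) : Prop :=
  (∀ i j k, p i j k = p j i k) ∧ (∀ i j k, 0 ≤ p i j k) ∧ (∀ i j, ∑ k, p i j k = 1)

/-- Dissipativity of the q.s.o.: `V x ≻ x` for every `x` in the simplex. -/
def IsDissipative {m : ℕ} (p : Fin m → Fin m → Fin m → ℝ) : Prop :=
  ∀ x ∈ stdSimplex ℝ (Fin m), Majorizes (QSO p x) x

/-- The `k`-th vertex of the simplex (the `k`-th standard basis vector). -/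
def vertex {m : ℕ} (k : Fin m) : Fin m → ℝ := fun j => if j = k then 1 else 0

/-- The ω-limit set of the trajectory of `x` under `V`: the set of all limit points of
the sequence `(Vⁿ x)ₙ`. -/
def omegaLimitSet {m : ℕ} (V : (Fin m → ℝ) → Fin m → ℝ) (x : Fin m → ℝ) :
    Set (Fin m → ℝ) :=
  {y | ∃ φ : ℕ → ℕ, StrictMono φ ∧ Tendsto (fun n => V^[φ n] x) atTop (𝓝 y)}

/-!
Write `a, b` for the vertices `e₁, e₂`. The hypotheses say `p_{ii} = e_a` for `i ≠ b` and
`p_{bb} = e_b`, so on an edge `V(s eᵢ + t eⱼ) = s² p_{ii} + 2st p_{ij} + t² p_{jj}`. Testing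
dissipativity on such points pins down the mixed coefficients: if `p_{ii} = e_c`, `p_{jj} = e_d`
with `c ≠ d`, then `p_{ij}` is supported on `{c, d}` (at the midpoint `Vx` must have support of
size at most two), and `p_{ij,c} ≥ 1/2` in all cases (compare a largest coordinate of `Vx` with
`x_i = l` and let `l → 1`). Hence `p_{ab} = (e_a + e_b)/2`, so every point of `[e_a, e_b]` is
fixed, and the mass `r` off `{a, b}` satisfies `r(Vz) ≤ r(z) - r(z)²/2`, so it tends to `0`
along every trajectory.
-/

section

variable {m : ℕ}

theorem vertex_eq_single (k : Fin m) : vertex k = Pi.single k 1 := by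
  ext j
  simp [vertex, Pi.single_apply]

theorem vertex_mem_stdSimplex (k : Fin m) : vertex k ∈ stdSimplex ℝ (Fin m) := by
  rw [vertex_eq_single]
  exact single_mem_stdSimplex ℝ k

theorem eq_vertex_of_mem_stdSimplex {f : Fin m → ℝ} (hf : f ∈ stdSimplex ℝ (Fin m)) {k : Fin m}
    (hk : f k = 1) : f = vertex k := by
  have hrest : ∑ j ∈ univ.erase k, f j = 0 := by
    linarith [add_sum_erase univ f (mem_univ k), hf.2]
  ext j
  by_cases hj : j = k
  · simp [vertex, hj, hk]
  · simpa [vertex, hj] using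
      (sum_eq_zero_iff_of_nonneg fun i _ => hf.1 i).1 hrest j (mem_erase.2 ⟨hj, mem_univ j⟩)

theorem QSO_mem_stdSimplex {p : Fin m → Fin m → Fin m → ℝ} (hp : IsQSOCoeff p)
    {x : Fin m → ℝ} (hx : x ∈ stdSimplex ℝ (Fin m)) : QSO p x ∈ stdSimplex ℝ (Fin m) := by
  refine ⟨fun k => sum_nonneg fun i _ => sum_nonneg fun j _ =>
    mul_nonneg (mul_nonneg (hp.2.1 i j k) (hx.1 i)) (hx.1 j), ?_⟩
  calc ∑ k, QSO p x k = ∑ i, ∑ j, (∑ k, p i j k) * x i * x j := by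
        simp only [QSO, sum_mul]
        rw [sum_comm]
        exact sum_congr rfl fun i _ => sum_comm
    _ = (∑ i, x i) * ∑ j, x j := by simp [hp.2.2, sum_mul_sum]
    _ = 1 := by rw [hx.2, one_mul]

theorem QSO_smul_vertex_add_smul_vertex {p : Fin m → Fin m → Fin m → ℝ}
    (hsym : ∀ i j k, p i j k = p j i k) (i j : Fin m) (s t : ℝ) :
    QSO p (s • vertex i + t • vertex j) = s ^ 2 • p i i + (2 * s * t) • p i j + t ^ 2 • p j j := by
  ext k
  simp [QSO, vertex, add_mul, mul_add, sum_add_distrib, ite_mul, mul_ite, hsym j i]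
  ring

theorem Majorizes.exists_apply_le {x y : Fin m → ℝ} (h : Majorizes y x) (j : Fin m) :
    ∃ c, x j ≤ y c := by
  obtain ⟨B, hB, hsum⟩ := h {j}
  obtain ⟨c, rfl⟩ := card_eq_one.1 hB
  exact ⟨c, by simpa using hsum⟩

theorem Majorizes.card_support_le {x y : Fin m → ℝ} (h : Majorizes y x)
    (hy : y ∈ stdSimplex ℝ (Fin m)) {A : Finset (Fin m)} (hA : ∑ c ∈ A, x c = 1) :
    #{c | y c ≠ 0} ≤ #A := by
  obtain ⟨B, hB, hsum⟩ := h A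
  have hout : ∑ c ∈ Bᶜ, y c = 0 := by
    linarith [sum_add_sum_compl B y, hy.2, sum_nonneg fun c (_ : c ∈ Bᶜ) => hy.1 c]
  rw [← hB]
  refine card_le_card fun c hc => ?_
  by_contra hcB
  exact (mem_filter.1 hc).2 <|
    (sum_eq_zero_iff_of_nonneg fun i _ => hy.1 i).1 hout c (mem_compl.2 hcB)

section DiagonalVertices

variable {p : Fin m → Fin m → Fin m → ℝ} {i j a b : Fin m}

theorem coeff_eq_zero_of_diag_eq_vertex (hp : IsQSOCoeff p) (hd : IsDissipative p)
    (hij : i ≠ j) (hab : a ≠ b) (hi : p i i = vertex a) (hj : p j j = vertex b) {k : Fin m}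
    (hka : k ≠ a) (hkb : k ≠ b) : p i j k = 0 := by
  set x : Fin m → ℝ := (1 / 2 : ℝ) • vertex i + (1 / 2 : ℝ) • vertex j
  have hx : x ∈ stdSimplex ℝ (Fin m) := convex_stdSimplex ℝ _
    (vertex_mem_stdSimplex i) (vertex_mem_stdSimplex j) (by norm_num) (by norm_num) (by norm_num)
  have hVx : QSO p x = (1 / 4 : ℝ) • vertex a + (1 / 2 : ℝ) • p i j + (1 / 4 : ℝ) • vertex b := by
    rw [QSO_smul_vertex_add_smul_vertex hp.1, hi, hj]
    norm_num
  have hsupp := (hd x hx).card_support_le (QSO_mem_stdSimplex hp hx) (A := {i, j})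
    (by simp [x, sum_pair hij, vertex, hij, hij.symm]; norm_num)
  by_contra hk
  have hsub : {a, b, k} ⊆ ({c | QSO p x c ≠ 0} : Finset (Fin m)) := by
    intro c hc
    have := hp.2.1 i j c
    simp only [mem_insert, mem_singleton] at hc
    rcases hc with rfl | rfl | rfl <;>
      simp [hVx, vertex, hab, hab.symm, hka, hkb, hk] <;> positivity
  have := card_le_card hsub
  rw [card_insert_of_notMem (by simp [hab, hka.symm]), card_pair hkb.symm] at this
  rw [card_pair hij] at hsupp
  omega

theorem coeff_le_one (hp : IsQSOCoeff p) (i j k : Fin m) : p i j k ≤ 1 :=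
  (single_le_sum (fun c _ => hp.2.1 i j c) (mem_univ k)).trans (hp.2.2 i j).le

theorem half_le_coeff_of_diag_eq_vertex (hp : IsQSOCoeff p) (hd : IsDissipative p)
    (hij : i ≠ j) (hi : p i i = vertex a) (hj : p j j = vertex b) : 1 / 2 ≤ p i j a := by
  set q := p i j a
  have key : ∀ l ∈ Set.Ico (2 / 3 : ℝ) 1, 2 * l * (1 - q) ≤ 1 := by
    rintro l ⟨hl0, hl1⟩
    set x : Fin m → ℝ := l • vertex i + (1 - l) • vertex j
    have hx : x ∈ stdSimplex ℝ (Fin m) := convex_stdSimplex ℝ _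
      (vertex_mem_stdSimplex i) (vertex_mem_stdSimplex j) (by linarith) (by linarith) (by ring)
    obtain ⟨c, hc⟩ := (hd x hx).exists_apply_le i
    have hxi : x i = l := by simp [x, vertex, hij]
    rw [hxi, QSO_smul_vertex_add_smul_vertex hp.1, hi, hj] at hc
    simp only [Pi.add_apply, Pi.smul_apply, smul_eq_mul] at hc
    have hb : 0 ≤ 1 - vertex b c := by unfold vertex; split_ifs <;> norm_num
    have hl : 0 ≤ (1 - l) ^ 2 * (1 - vertex b c) := by positivity
    by_cases hca : c = a
    · subst hca
      rw [show vertex c c = 1 from if_pos rfl] at hc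
      have hprod : 0 ≤ (1 - l) * (1 - 2 * l * (1 - q)) := by nlinarith
      linarith [(mul_nonneg_iff_of_pos_left (sub_pos.2 hl1)).1 hprod]
    · -- off `a`, the coordinate is at most `2l(1 - l) + (1 - l)² = 1 - l² < l`, as `l ≥ 2/3`
      rw [show vertex a c = 0 from if_neg hca] at hc
      have : 0 ≤ l * (1 - l) * (1 - p i j c) :=
        mul_nonneg (mul_nonneg (by linarith) (by linarith)) (by linarith [coeff_le_one hp i j c])
      nlinarith
  have hlim : Tendsto (fun l : ℝ => 2 * l * (1 - q)) (𝓝[<] 1) (𝓝 (2 * 1 * (1 - q))) :=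
    ((continuous_const.mul continuous_id).mul continuous_const).continuousWithinAt
  have hnear : ∀ᶠ l in 𝓝[<] (1 : ℝ), l ∈ Set.Ico (2 / 3 : ℝ) 1 := Ico_mem_nhdsLT (by norm_num)
  linarith [le_of_tendsto hlim (hnear.mono key)]

theorem coeff_eq_midpoint_of_diag_eq_vertex (hp : IsQSOCoeff p) (hd : IsDissipative p)
    (hij : i ≠ j) (hab : a ≠ b) (hi : p i i = vertex a) (hj : p j j = vertex b) :
    p i j = (1 / 2 : ℝ) • vertex a + (1 / 2 : ℝ) • vertex b := by
  have hpa := half_le_coeff_of_diag_eq_vertex hp hd hij hi hj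
  have hpb : 1 / 2 ≤ p i j b := hp.1 j i b ▸ half_le_coeff_of_diag_eq_vertex hp hd hij.symm hj hi
  have hzero : ∀ k, k ≠ a → k ≠ b → p i j k = 0 := fun k =>
    coeff_eq_zero_of_diag_eq_vertex hp hd hij hab hi hj
  have hsum : p i j a + p i j b = 1 := by
    rw [← Fintype.sum_eq_add a b hab fun k hk => hzero k hk.1 hk.2]
    exact hp.2.2 i j
  ext k
  by_cases hka : k = a
  · subst hka; simp [vertex, hab]; linarith
  by_cases hkb : k = b
  · subst hkb; simp [vertex, hka]; linarith
  · simp [vertex, hka, hkb, hzero k hka hkb]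

end DiagonalVertices

theorem QSO_eq_self_of_mem_segment {p : Fin m → Fin m → Fin m → ℝ}
    (hsym : ∀ i j k, p i j k = p j i k) {a b : Fin m} (ha : p a a = vertex a)
    (hb : p b b = vertex b) (hab : p a b = (1 / 2 : ℝ) • vertex a + (1 / 2 : ℝ) • vertex b)
    {z : Fin m → ℝ} (hz : z ∈ segment ℝ (vertex a) (vertex b)) : QSO p z = z := by
  obtain ⟨s, t, -, -, hst, rfl⟩ := hz
  obtain rfl : t = 1 - s := by linarith
  rw [QSO_smul_vertex_add_smul_vertex hsym, ha, hb, hab]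
  module

section Setting

variable {p : Fin m → Fin m → Fin m → ℝ} {a b : Fin m}

theorem sum_compl_coeff_eq_zero (hp : IsQSOCoeff p) (hd : IsDissipative p) (hab : a ≠ b)
    (ha : ∀ i, i ≠ b → p i i = vertex a) (hb : p b b = vertex b) {i j : Fin m}
    (h : i = j ∨ i = b ∨ j = b) : ∑ k ∈ {a, b}ᶜ, p i j k = 0 := by
  have hdiag : ∀ i, ∀ k ∈ ({a, b} : Finset (Fin m))ᶜ, p i i k = 0 := by
    intro i k hk
    simp only [mem_compl, mem_insert, mem_singleton, not_or] at hk
    by_cases hi : i = b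
    · simp [hi, hb, vertex, hk.2]
    · simp [ha i hi, vertex, hk.1]
  have hrow : ∀ j, ∀ k ∈ ({a, b} : Finset (Fin m))ᶜ, p b j k = 0 := by
    intro j k hk
    simp only [mem_compl, mem_insert, mem_singleton, not_or] at hk
    by_cases hj : j = b
    · exact hj ▸ hdiag b k (by simp [hk.1, hk.2])
    · exact coeff_eq_zero_of_diag_eq_vertex hp hd (Ne.symm hj) hab.symm hb (ha j hj) hk.2 hk.1
  rcases h with rfl | rfl | rfl
  · exact sum_eq_zero (hdiag i)
  · exact sum_eq_zero (hrow j)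
  · exact sum_eq_zero fun k hk => hp.1 i j k ▸ hrow i k hk

theorem sum_compl_coeff_le_half (hp : IsQSOCoeff p) (hd : IsDissipative p) (hab : a ≠ b)
    (ha : ∀ i, i ≠ b → p i i = vertex a) {i j : Fin m} (hi : i ≠ b) (hj : j ≠ b)
    (hij : i ≠ j) : ∑ k ∈ {a, b}ᶜ, p i j k ≤ 1 / 2 := by
  have hsplit := sum_add_sum_compl {a, b} (p i j)
  rw [sum_pair hab, hp.2.2 i j] at hsplit
  linarith [half_le_coeff_of_diag_eq_vertex hp hd hij (ha i hi) (ha j hj), hp.2.1 i j b]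

theorem sum_compl_QSO_le (hp : IsQSOCoeff p) (hd : IsDissipative p) (hab : a ≠ b)
    (ha : ∀ i, i ≠ b → p i i = vertex a) (hb : p b b = vertex b) {z : Fin m → ℝ}
    (hz : z ∈ stdSimplex ℝ (Fin m)) :
    ∑ k ∈ {a, b}ᶜ, QSO p z k ≤
      ∑ k ∈ {a, b}ᶜ, z k - 1 / 2 * (∑ k ∈ {a, b}ᶜ, z k) ^ 2 := by
  set r := ∑ k ∈ {a, b}ᶜ, z k
  set c : Fin m → Fin m → ℝ := fun i j => ∑ k ∈ {a, b}ᶜ, p i j k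
  set u : Fin m → ℝ := fun i => z i - if i = b then z b else 0
  set v : Fin m → ℝ := fun i => if i = a then z a else 0
  have hexpand : ∑ k ∈ {a, b}ᶜ, QSO p z k = ∑ i, ∑ j, c i j * z i * z j := by
    simp only [QSO, c, sum_mul]
    rw [sum_comm]
    exact sum_congr rfl fun i _ => sum_comm
  -- `u` is `z` without its `b`-coordinate, `v` keeps only the `a`-coordinate; the bound is
  -- `½ ((z a + r)² - (z a)²) ≤ r - r²/2`
  have hterm : ∀ i j, c i j * z i * z j ≤ 1 / 2 * (u i * u j - v i * v j) := by
    intro i j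
    by_cases h : i = j ∨ i = b ∨ j = b
    · rw [show c i j = 0 from sum_compl_coeff_eq_zero hp hd hab ha hb h]
      rcases h with rfl | rfl | rfl
      · rcases eq_or_ne i a with rfl | hia
        · simp [u, v, hab]
        · by_cases hib : i = b <;> simp [u, v, hia, hib, hab.symm, mul_self_nonneg]
      · simp [u, v, hab.symm]
      · simp [u, v, hab.symm]
    · simp only [not_or] at h
      obtain ⟨hij, hi, hj⟩ := h
      have hv : v i * v j = 0 := by
        rcases eq_or_ne i a with rfl | hia
        · simp [v, Ne.symm hij]
        · simp [v, hia]
      have hc := sum_compl_coeff_le_half hp hd hab ha hi hj hij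
      simp only [u, hi, hj, if_false, sub_zero, hv]
      nlinarith [mul_nonneg (hz.1 i) (hz.1 j)]
  have htot : z a + z b + r = 1 := by
    rw [← sum_pair hab, sum_add_sum_compl, hz.2]
  have hu : ∑ i, u i = z a + r := by
    simp only [u, sum_sub_distrib, sum_ite_eq', mem_univ, if_true, hz.2]
    linarith
  have hv : ∑ i, v i = z a := by simp [v]
  have hr : 0 ≤ r := sum_nonneg fun k _ => hz.1 k
  calc ∑ k ∈ {a, b}ᶜ, QSO p z k
      ≤ ∑ i, ∑ j, 1 / 2 * (u i * u j - v i * v j) := by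
        rw [hexpand]
        exact sum_le_sum fun i _ => sum_le_sum fun j _ => hterm i j
    _ = 1 / 2 * ((∑ i, u i) ^ 2 - (∑ i, v i) ^ 2) := by
        rw [sq, sq, sum_mul_sum, sum_mul_sum, ← sum_sub_distrib, mul_sum]
        exact sum_congr rfl fun i _ => by rw [← sum_sub_distrib, mul_sum]
    _ ≤ r - 1 / 2 * r ^ 2 := by
        rw [hu, hv]
        nlinarith [mul_nonneg hr (hz.1 b)]

end Setting

theorem tendsto_zero_of_le_sub_mul_sq {r : ℕ → ℝ} {c : ℝ} (hc : 0 < c) (h0 : ∀ n, 0 ≤ r n)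
    (h : ∀ n, r (n + 1) ≤ r n - c * r n ^ 2) : Tendsto r atTop (𝓝 0) := by
  have hanti : Antitone r := antitone_nat_of_succ_le fun n => by nlinarith [h n, sq_nonneg (r n)]
  have hlim := tendsto_atTop_ciInf hanti ⟨0, by rintro _ ⟨n, rfl⟩; exact h0 n⟩
  set L := ⨅ n, r n
  have hL0 : 0 ≤ L := le_ciInf h0
  have hL : L ≤ L - c * L ^ 2 :=
    le_of_tendsto_of_tendsto' (hlim.comp (tendsto_add_atTop_nat 1))
      (hlim.sub ((hlim.pow 2).const_mul c)) h
  have : L = 0 := by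
    by_contra hne
    linarith [mul_pos hc (pow_pos (hL0.lt_of_ne (Ne.symm hne)) 2)]
  rwa [this] at hlim

theorem omegaLimitSet_subset {V : (Fin m → ℝ) → Fin m → ℝ} {x : Fin m → ℝ}
    {C : Set (Fin m → ℝ)} (hC : IsClosed C) (hxC : ∀ n, V^[n] x ∈ C)
    {g : (Fin m → ℝ) → ℝ} (hg : Continuous g) {c : ℝ}
    (hgx : Tendsto (fun n => g (V^[n] x)) atTop (𝓝 c)) :
    omegaLimitSet V x ⊆ {y | y ∈ C ∧ g y = c} := by
  rintro y ⟨φ, hφ, hy⟩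
  exact ⟨hC.mem_of_tendsto hy (Eventually.of_forall fun n => hxC (φ n)),
    tendsto_nhds_unique ((hg.tendsto y).comp hy) (hgx.comp hφ.tendsto_atTop)⟩

theorem mem_segment_vertex_of_sum_compl_eq_zero {a b : Fin m} (hab : a ≠ b) {y : Fin m → ℝ}
    (hy : y ∈ stdSimplex ℝ (Fin m)) (h0 : ∑ k ∈ {a, b}ᶜ, y k = 0) :
    y ∈ segment ℝ (vertex a) (vertex b) := by
  have hK := (sum_eq_zero_iff_of_nonneg fun k _ => hy.1 k).1 h0
  have htot : y a + y b = 1 := by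
    rw [← sum_pair hab, ← hy.2, ← sum_add_sum_compl {a, b} y, h0, add_zero]
  refine ⟨y a, y b, hy.1 a, hy.1 b, htot, funext fun k => ?_⟩
  by_cases hka : k = a
  · subst hka; simp [vertex, hab]
  by_cases hkb : k = b
  · subst hkb; simp [vertex, hka]
  · simp [vertex, hka, hkb, hK k (by simp [hka, hkb])]

theorem segment_vertex_infinite {a b : Fin m} (hab : a ≠ b) :
    (segment ℝ (vertex a) (vertex b)).Infinite := by
  rw [segment_eq_image]
  refine (Set.Icc_infinite zero_lt_one).image fun s _ t _ hst => ?_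
  simpa [vertex, hab] using congrFun hst a

theorem segment_vertex_subset_stdSimplex (a b : Fin m) :
    segment ℝ (vertex a) (vertex b) ⊆ stdSimplex ℝ (Fin m) :=
  (convex_stdSimplex ℝ _).segment_subset (vertex_mem_stdSimplex a) (vertex_mem_stdSimplex b)

end

/-- if `p_{ii,1} = 1` for all `i ≠ 2` and `p_{22,2} = 1`, the dissipative
q.s.o. has infinitely many fixed points and every ω-limit set is contained in the
segment joining `e₁` and `e₂`.  (Indices 0-based: `1 ↦ 0`, `2 ↦ 1`.) -/
theorem stmt5 {m : ℕ} (hm : 1 < m) (p : Fin m → Fin m → Fin m → ℝ)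
    (hp : IsQSOCoeff p) (hd : IsDissipative p)
    (h1 : ∀ i : Fin m, i ≠ ⟨1, hm⟩ → p i i ⟨0, by omega⟩ = 1)
    (h2 : p ⟨1, hm⟩ ⟨1, hm⟩ ⟨1, hm⟩ = 1) :
    {x ∈ stdSimplex ℝ (Fin m) | QSO p x = x}.Infinite ∧
    ∀ x ∈ stdSimplex ℝ (Fin m),
      omegaLimitSet (QSO p) x ⊆
        segment ℝ (vertex (⟨0, by omega⟩ : Fin m)) (vertex (⟨1, hm⟩ : Fin m)) := by
  set a : Fin m := ⟨0, by omega⟩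
  set b : Fin m := ⟨1, hm⟩
  have hab : a ≠ b := by simp [a, b, Fin.ext_iff]
  have ha : ∀ i, i ≠ b → p i i = vertex a := fun i hi =>
    eq_vertex_of_mem_stdSimplex ⟨hp.2.1 i i, hp.2.2 i i⟩ (h1 i hi)
  have hb : p b b = vertex b := eq_vertex_of_mem_stdSimplex ⟨hp.2.1 b b, hp.2.2 b b⟩ h2
  have hfix : ∀ z ∈ segment ℝ (vertex a) (vertex b), QSO p z = z := fun _ =>
    QSO_eq_self_of_mem_segment hp.1 (ha a hab) hb
      (coeff_eq_midpoint_of_diag_eq_vertex hp hd hab hab (ha a hab) hb)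
  refine ⟨(segment_vertex_infinite hab).mono fun z hz =>
    ⟨segment_vertex_subset_stdSimplex a b hz, hfix z hz⟩, fun x hx y hy => ?_⟩
  have htraj : ∀ n, (QSO p)^[n] x ∈ stdSimplex ℝ (Fin m) := fun n =>
    (Set.MapsTo.iterate (fun _ => QSO_mem_stdSimplex hp) n) hx
  have hmass : Tendsto (fun n => ∑ k ∈ {a, b}ᶜ, (QSO p)^[n] x k) atTop (𝓝 0) :=
    tendsto_zero_of_le_sub_mul_sq one_half_pos (fun n => sum_nonneg fun k _ => (htraj n).1 k)
      fun n => by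
        rw [Function.iterate_succ_apply']
        exact sum_compl_QSO_le hp hd hab ha hb (htraj n)
  obtain ⟨hyS, hy0⟩ := omegaLimitSet_subset (isClosed_stdSimplex ℝ _) htraj
    (continuous_finsetSum _ fun k _ => continuous_apply k) hmass hy
  exact mem_segment_vertex_of_sum_compl_eq_zero hab hyS hy0
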